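/- (Linear convergence under dual relative strong convexity) In addition to the hypotheses guaranteeing the descent lemma (f essentially smooth convex minimized at x_min, k Legendre convex uniquely minimized at 0, ∇f(int(dom f)) ⊆ int(dom k), D_k(∇f(y),∇f(x)) ≤ L*·D_f(x,y)), assume f is Legendre convex and there exists μ* > 0 with μ*·D_f(x, y) ≤ D_k(∇f(y), ∇f(x)) for all x, y ∈ int(dom f). Then for all i > 0 the iterates of dual preconditioned gradient descent satisfy f(x_i) − f(x_min) ≤ (1 − μ*/L*)^i · (f(x₀) − f(x_min)). -/

import Mathlib

open Filter Topology RealInnerProductSpace Classical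

noncomputable section

abbrev E (d : ℕ) := EuclideanSpace ℝ (Fin d)

def IsEssentiallySmooth {d : ℕ} (f : E d → ℝ) (S : Set (E d)) (f' : E d → E d) : Prop :=
  (interior S).Nonempty ∧
  (∀ x ∈ interior S, HasGradientAt f (f' x) x) ∧
  ∀ (u : ℕ → E d) (y : E d), (∀ n, u n ∈ interior S) → y ∈ frontier S →
    Tendsto u atTop (𝓝 y) → Tendsto (fun n => ‖f' (u n)‖) atTop atTop

def IsProperClosedConvexOn {d : ℕ} (f : E d → ℝ) (S : Set (E d)) : Prop :=
  S.Nonempty ∧ ConvexOn ℝ S f ∧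
  IsClosed {p : E d × ℝ | p.1 ∈ S ∧ f p.1 ≤ p.2}

def IsLegendre {d : ℕ} (f : E d → ℝ) (S : Set (E d)) (f' : E d → E d) : Prop :=
  IsProperClosedConvexOn f S ∧ IsEssentiallySmooth f S f' ∧
  StrictConvexOn ℝ (interior S) f

/-- The (classical) Bregman divergence `D_f(x, y) = f(x) - f(y) - ⟪∇f(y), x - y⟫`. -/
def Breg {d : ℕ} (f : E d → ℝ) (f' : E d → E d) (x y : E d) : ℝ :=
  f x - f y - ⟪f' y, x - y⟫

/-!
Write `p = ∇f z`, `c = ∇k p` and `γ s = z - (s / L) • c`, so that `γ 1` is the next iterate.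
Relative smoothness at `(z, γ s)`, combined with the gradient inequality for `f` at `γ s`, gives
`s * (k (∇f (γ s)) - k p + ⟪c, p⟫) ≤ L * (f z - f (γ s))` as long as `γ s` is interior. With the
gradient inequality at `z` this forces `k (∇f (γ s)) ≤ k p`; sublevel sets of `k` are bounded, so
`∇f` stays bounded along the segment and essential smoothness keeps it in the interior. At `s = 1`
the inequality is the descent step `D_k(0, p) ≤ L * (f z - f (γ 1))`, while dual relative strong
convexity at `(z, x_min)`, where `∇f` vanishes, gives `μ * (f z - f x_min) ≤ D_k(0, p)`.
Together they contract `f - f x_min` by the factor `1 - μ / L` at every step.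
-/

open Set Metric

theorem isMinOn_of_forall_ne_lt {α β : Type*} [Preorder β] {f : α → β} {s : Set α} {a : α}
    (h : ∀ y ∈ s, y ≠ a → f a < f y) : IsMinOn f s a := fun y hy =>
  (eq_or_ne y a).elim (fun hya => hya ▸ le_rfl) fun hya => (h y hy hya).le

section InnerProductSpace

variable {F : Type*} [NormedAddCommGroup F] [InnerProductSpace ℝ F] [CompleteSpace F]
  {f : F → ℝ} {S : Set F}

theorem IsLocalMin.hasGradientAt_eq_zero {a g : F} (h : IsLocalMin f a)
    (hg : HasGradientAt f g a) : g = 0 := by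
  simpa using h.hasFDerivAt_eq_zero (hasGradientAt_iff_hasFDerivAt.mp hg)

theorem ConvexOn.add_inner_le_of_hasGradientAt (hf : ConvexOn ℝ S f) {z g y : F} (hz : z ∈ S)
    (hg : HasGradientAt f g z) (hy : y ∈ S) : f z + ⟪g, y - z⟫ ≤ f y := by
  have hline : HasDerivAt (fun t : ℝ => z + t • (y - z)) (y - z) 0 := by
    simpa using ((hasDerivAt_id (0 : ℝ)).smul_const (y - z)).const_add z
  have hderiv : HasDerivAt (fun t : ℝ => f (z + t • (y - z))) ⟪g, y - z⟫ 0 := by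
    have hg' : HasFDerivAt f (InnerProductSpace.toDual ℝ F g) (z + (0 : ℝ) • (y - z)) := by
      simpa using hasGradientAt_iff_hasFDerivAt.mp hg
    have hcomp := hg'.comp_hasDerivAt 0 hline
    simp only [InnerProductSpace.toDual_apply_apply] at hcomp
    exact hcomp
  have hslope : ∀ᶠ t in 𝓝[>] (0 : ℝ), slope (fun t : ℝ => f (z + t • (y - z))) 0 t ≤ f y - f z := by
    filter_upwards [Ioc_mem_nhdsGT one_pos] with t ⟨ht0, ht1⟩
    have hconv := hf.2 hz hy (sub_nonneg.2 ht1) ht0.le (sub_add_cancel 1 t)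
    rw [show (1 - t) • z + t • y = z + t • (y - z) by module] at hconv
    rw [slope_def_field, zero_smul, add_zero, sub_zero, div_le_iff₀ ht0]
    simp only [smul_eq_mul] at hconv
    linarith
  have hGT : 𝓝[>] (0 : ℝ) ≤ 𝓝[≠] 0 := nhdsWithin_mono _ fun _ ht => ne_of_gt ht
  have := le_of_tendsto ((hasDerivAt_iff_tendsto_slope.mp hderiv).mono_left hGT) hslope
  linarith

theorem ConvexOn.mul_norm_add_inner_le_of_hasGradientAt (hf : ConvexOn ℝ S f) {u g x₀ : F}
    {r M : ℝ} (hu : u ∈ S) (hg : HasGradientAt f g u) (hr : 0 ≤ r)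
    (hball : closedBall x₀ r ⊆ S) (hM : ∀ v ∈ closedBall x₀ r, f v ≤ M) :
    r * ‖g‖ + ⟪g, x₀ - u⟫ ≤ M - f u := by
  rcases eq_or_ne g 0 with rfl | hg0
  · have := hf.add_inner_le_of_hasGradientAt hu hg (hball (mem_closedBall_self hr))
    simp only [inner_zero_left, add_zero, norm_zero, mul_zero] at this ⊢
    linarith [hM x₀ (mem_closedBall_self hr)]
  have hgpos : 0 < ‖g‖ := norm_pos_iff.2 hg0
  set v := x₀ + (r / ‖g‖) • g
  have hv : v ∈ closedBall x₀ r := by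
    rw [mem_closedBall, dist_eq_norm, add_sub_cancel_left, norm_smul, Real.norm_eq_abs,
      abs_of_nonneg (by positivity), div_mul_cancel₀ _ hgpos.ne']
  have hinner : ⟪g, v - u⟫ = r * ‖g‖ + ⟪g, x₀ - u⟫ := by
    rw [show v - u = (r / ‖g‖) • g + (x₀ - u) by simp only [v]; abel, inner_add_right,
      real_inner_smul_right, real_inner_self_eq_norm_sq]
    field_simp
  linarith [hf.add_inner_le_of_hasGradientAt hu hg (hball hv), hM v hv]

end InnerProductSpace

section NormedSpace

variable {F : Type*} [NormedAddCommGroup F] [NormedSpace ℝ F] {f : F → ℝ} {S : Set F}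

theorem lineMap_mem_sphere_of_lt_dist {x₀ y : F} {ρ : ℝ} (hρ : 0 ≤ ρ) (hy : ρ < dist y x₀) :
    AffineMap.lineMap x₀ y (ρ / dist y x₀) ∈ sphere x₀ ρ := by
  rw [mem_sphere, dist_lineMap_left, Real.norm_eq_abs, abs_of_nonneg (by positivity),
    dist_comm x₀ y, div_mul_cancel₀ _ (hρ.trans_lt hy).ne']

theorem ConvexOn.isBounded_sublevel_of_unique_min [FiniteDimensional ℝ F] (hf : ConvexOn ℝ S f)
    {x₀ : F} (hx₀ : x₀ ∈ interior S) (hmin : ∀ y ∈ S, y ≠ x₀ → f x₀ < f y) (C : ℝ) :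
    Bornology.IsBounded {y ∈ S | f y ≤ C} := by
  obtain ⟨ρ, hρ, hball⟩ := nhds_basis_closedBall.mem_iff.1 (isOpen_interior.mem_nhds hx₀)
  rcases (sphere x₀ ρ).eq_empty_or_nonempty with hsp | hsp
  · refine isBounded_closedBall (x := x₀) (r := ρ) |>.subset fun y _ => ?_
    by_contra hy
    exact (hsp ▸ lineMap_mem_sphere_of_lt_dist hρ.le (not_le.1 hy) : _ ∈ (∅ : Set F))
  have hcont : ContinuousOn f (sphere x₀ ρ) :=
    hf.continuousOn_interior.mono (sphere_subset_closedBall.trans hball)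
  obtain ⟨w, hw, hwmin⟩ := (isCompact_sphere x₀ ρ).exists_isMinOn hsp hcont
  have hw0 : f x₀ < f w := hmin w (interior_subset (hball (sphere_subset_closedBall hw)))
    (ne_of_mem_sphere hw hρ.ne')
  -- on a ray from `x₀`, `f` grows beyond the sphere at least with slope `(f w - f x₀) / ρ`
  refine isBounded_closedBall (x := x₀) (r := max ρ (ρ * (C - f x₀) / (f w - f x₀))) |>.subset
    fun y ⟨hyS, hyC⟩ => ?_
  rw [mem_closedBall]
  rcases le_or_gt (dist y x₀) ρ with hy | hy
  · exact hy.trans (le_max_left _ _)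
  set t := ρ / dist y x₀
  have ht : t * dist y x₀ = ρ := div_mul_cancel₀ _ (hρ.trans hy).ne'
  have ht1 : t ≤ 1 := (div_le_one (hρ.trans hy)).2 hy.le
  have hseg : f (AffineMap.lineMap x₀ y t) ≤ (1 - t) * f x₀ + t * f y := by
    rw [AffineMap.lineMap_apply_module]
    exact hf.2 (interior_subset hx₀) hyS (sub_nonneg.2 ht1) (by positivity) (sub_add_cancel 1 t)
  have hwle : f w ≤ f (AffineMap.lineMap x₀ y t) := hwmin (lineMap_mem_sphere_of_lt_dist hρ.le hy)
  have hgrowth : f w - f x₀ ≤ t * (C - f x₀) := by nlinarith [(by positivity : 0 ≤ t)]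
  refine le_trans ?_ (le_max_right _ _)
  rw [le_div_iff₀ (sub_pos.2 hw0)]
  calc dist y x₀ * (f w - f x₀) ≤ dist y x₀ * (t * (C - f x₀)) :=
        mul_le_mul_of_nonneg_left hgrowth dist_nonneg
    _ = ρ * (C - f x₀) := by rw [← ht]; ring

end NormedSpace

namespace IsEssentiallySmooth

variable {d : ℕ} {f : E d → ℝ} {S : Set (E d)} {f' : E d → E d}

theorem mem_interior_of_isMinOn (hsm : IsEssentiallySmooth f S f') (hf : ConvexOn ℝ S f)
    {w : E d} (hw : w ∈ S) (hmin : IsMinOn f S w) : w ∈ interior S := by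
  by_contra hwi
  obtain ⟨x₀, hx₀⟩ := hsm.1
  obtain ⟨r, hr, hball⟩ := nhds_basis_closedBall.mem_iff.1 (isOpen_interior.mem_nhds hx₀)
  obtain ⟨M, hM⟩ := (isCompact_closedBall x₀ r).bddAbove_image
    (hf.continuousOn_interior.mono hball)
  set t : ℕ → ℝ := fun n => 1 / (n + 1)
  have ht : ∀ n, 0 < t n ∧ t n ≤ 1 := fun n =>
    ⟨Nat.one_div_pos_of_nat, div_le_one_of_le₀ (by simp) (by positivity)⟩
  set u : ℕ → E d := fun n => w + t n • (x₀ - w)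
  have hu : ∀ n, u n ∈ interior S := fun n => by
    convert hf.1.combo_interior_closure_mem_interior hx₀ (subset_closure hw) (ht n).1
      (sub_nonneg.2 (ht n).2) (add_sub_cancel (t n) 1) using 1
    simp only [u]
    module
  have hlim : Tendsto u atTop (𝓝 w) := by
    simpa [u, t] using (tendsto_const_nhds (x := w)).add
      ((tendsto_one_div_add_atTop_nhds_zero_nat (𝕜 := ℝ)).smul_const (x₀ - w))
  -- bounded gradients along a sequence tending to the boundary point `w` contradict
  -- essential smoothness
  have hbdd : ∀ n, r * ‖f' (u n)‖ ≤ M - f w := fun n => by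
    have hgrad := hsm.2.1 (u n) (hu n)
    have hfu : f w ≤ f (u n) := hmin (interior_subset (hu n))
    have htowards : ⟪f' (u n), w - u n⟫ ≤ 0 := by
      linarith [hf.add_inner_le_of_hasGradientAt (interior_subset (hu n)) hgrad hw]
    have hnonneg : 0 ≤ ⟪f' (u n), x₀ - u n⟫ := by
      have hw' : w - u n = -t n • (x₀ - w) := by simp only [u]; module
      have hx₀' : x₀ - u n = (1 - t n) • (x₀ - w) := by simp only [u]; module
      rw [hw', real_inner_smul_right] at htowards
      rw [hx₀', real_inner_smul_right]
      exact mul_nonneg (sub_nonneg.2 (ht n).2) (by nlinarith [(ht n).1])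
    linarith [hf.mul_norm_add_inner_le_of_hasGradientAt (interior_subset (hu n)) hgrad hr.le
      (hball.trans interior_subset) fun v hv => hM ⟨v, hv, rfl⟩]
  obtain ⟨n, hn⟩ := ((hsm.2.2 u w hu ⟨subset_closure hw, hwi⟩ hlim).eventually_gt_atTop
    ((M - f w) / r)).exists
  exact (div_lt_iff₀ hr).1 hn |>.not_ge (by linarith [hbdd n])

theorem mem_interior_of_norm_le_along_path (hsm : IsEssentiallySmooth f S f') {γ : ℝ → E d}
    (hγ : Continuous γ) (h0 : γ 0 ∈ interior S) {R : ℝ}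
    (hR : ∀ s ∈ Ioc (0 : ℝ) 1, γ s ∈ interior S → ‖f' (γ s)‖ ≤ R) :
    ∀ s ∈ Icc (0 : ℝ) 1, γ s ∈ interior S := by
  by_contra! ⟨s₀, hs₀, hs₀S⟩
  set A := Icc (0 : ℝ) 1 ∩ γ ⁻¹' (interior S)ᶜ
  have hA : IsClosed A := isClosed_Icc.inter (isOpen_interior.preimage hγ).isClosed_compl
  have hAbdd : BddBelow A := ⟨0, fun s hs => hs.1.1⟩
  set T := sInf A
  obtain ⟨⟨hT0, hT1⟩, hTS⟩ : T ∈ A := hA.csInf_mem ⟨s₀, hs₀, hs₀S⟩ hAbdd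
  have hTpos : 0 < T := hT0.lt_of_ne fun h => hTS (h ▸ h0)
  have hbefore : ∀ s ∈ Ioo 0 T, γ s ∈ interior S := fun s hs => by
    by_contra h
    exact (csInf_le hAbdd ⟨⟨hs.1.le, hs.2.le.trans hT1⟩, h⟩).not_gt hs.2
  obtain ⟨s, -, hs, hlim⟩ := exists_seq_strictMono_tendsto' hTpos
  have hsS : ∀ n, γ (s n) ∈ interior S := fun n => hbefore _ (hs n)
  have hγlim : Tendsto (γ ∘ s) atTop (𝓝 (γ T)) := (hγ.tendsto T).comp hlim
  have hfront : γ T ∈ frontier S :=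
    ⟨closure_mono interior_subset (mem_closure_of_tendsto hγlim (.of_forall hsS)), hTS⟩
  obtain ⟨n, hn⟩ := ((hsm.2.2 _ _ hsS hfront hγlim).eventually_gt_atTop R).exists
  exact hn.not_ge (hR _ ⟨(hs n).1, (hs n).2.le.trans hT1⟩ (hsS n))

end IsEssentiallySmooth

def DualRelSmooth {d : ℕ} (f k : E d → ℝ) (S : Set (E d)) (f' k' : E d → E d) (L : ℝ) : Prop :=
  ∀ x ∈ interior S, ∀ y ∈ interior S, Breg k k' (f' y) (f' x) ≤ L * Breg f f' x y

section PreconditionedStep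

variable {d : ℕ} {f k : E d → ℝ} {Sf Sk : Set (E d)} {f' k' : E d → E d} {L : ℝ}

theorem DualRelSmooth.mul_le_sub_of_sub_eq_smul (hrel : DualRelSmooth f k Sf f' k' L)
    (hf : ConvexOn ℝ Sf f) (hgrad : ∀ x ∈ interior Sf, HasGradientAt f (f' x) x) (hL : 0 < L)
    {z y : E d} {s : ℝ} (hz : z ∈ interior Sf) (hy : y ∈ interior Sf) (hs0 : 0 ≤ s)
    (hs1 : s ≤ 1) (hzy : z - y = (s / L) • k' (f' z)) :
    s * (k (f' y) - k (f' z) + ⟪k' (f' z), f' z⟫) ≤ L * (f z - f y) := by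
  have hsmooth := hrel z hz y hy
  have hconv := hf.add_inner_le_of_hasGradientAt (interior_subset hy) (hgrad y hy)
    (interior_subset hz)
  simp only [Breg, hzy, inner_sub_right, real_inner_smul_right] at hsmooth hconv
  rw [real_inner_comm (f' y) (k' (f' z))] at hsmooth
  set a := ⟪f' y, k' (f' z)⟫
  have hLa : L * (s / L * a) = s * a := by rw [← mul_assoc, mul_div_cancel₀ s hL.ne']
  have hconv' : s * a ≤ L * (f z - f y) := by nlinarith
  -- `s` times relative smoothness plus `1 - s` times the gradient inequality at `y`
  nlinarith [mul_le_mul_of_nonneg_left hsmooth hs0,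
    mul_le_mul_of_nonneg_left hconv' (sub_nonneg.2 hs1)]

theorem DualRelSmooth.apply_grad_le_of_sub_eq_smul (hrel : DualRelSmooth f k Sf f' k' L)
    (hf : ConvexOn ℝ Sf f) (hgrad : ∀ x ∈ interior Sf, HasGradientAt f (f' x) x) (hL : 0 < L)
    {z y : E d} {s : ℝ} (hz : z ∈ interior Sf) (hy : y ∈ interior Sf) (hs0 : 0 < s)
    (hs1 : s ≤ 1) (hzy : z - y = (s / L) • k' (f' z)) :
    k (f' y) ≤ k (f' z) := by
  have hmain := hrel.mul_le_sub_of_sub_eq_smul hf hgrad hL hz hy hs0.le hs1 hzy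
  have hconv := hf.add_inner_le_of_hasGradientAt (interior_subset hz) (hgrad z hz)
    (interior_subset hy)
  rw [← neg_sub, hzy, inner_neg_right, real_inner_smul_right, real_inner_comm] at hconv
  have hconv' : L * (f z - f y) ≤ s * ⟪k' (f' z), f' z⟫ := by
    have := mul_le_mul_of_nonneg_left (show f z - f y ≤ s / L * ⟪k' (f' z), f' z⟫ by linarith)
      hL.le
    rwa [← mul_assoc, mul_div_cancel₀ s hL.ne'] at this
  exact sub_nonpos.1 (nonpos_of_mul_nonpos_right (by linarith) hs0)

theorem DualRelSmooth.step_mem_interior_and_descent (hrel : DualRelSmooth f k Sf f' k' L)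
    (hf : ConvexOn ℝ Sf f) (hfsm : IsEssentiallySmooth f Sf f') (hk : ConvexOn ℝ Sk k)
    (hk0 : (0 : E d) ∈ interior Sk) (hk0min : ∀ y ∈ Sk, y ≠ 0 → k 0 < k y) (hL : 0 < L)
    (hincl : ∀ x ∈ interior Sf, f' x ∈ interior Sk) {z : E d} (hz : z ∈ interior Sf) :
    z - (1 / L) • k' (f' z) ∈ interior Sf ∧
      Breg k k' 0 (f' z) ≤ L * (f z - f (z - (1 / L) • k' (f' z))) := by
  set γ : ℝ → E d := fun s => z - (s / L) • k' (f' z)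
  have hzγ : ∀ s, z - γ s = (s / L) • k' (f' z) := fun s => sub_sub_cancel _ _
  obtain ⟨R, hR⟩ := isBounded_iff_forall_norm_le.1
    (hk.isBounded_sublevel_of_unique_min hk0 hk0min (k (f' z)))
  -- along the segment `k ∘ f'` stays below `k (f' z)`, so `f'` stays bounded
  have hγint : γ 1 ∈ interior Sf := by
    refine hfsm.mem_interior_of_norm_le_along_path (by fun_prop) (by simpa [γ] using hz)
      (R := R) (fun s hs hγs => hR _ ⟨interior_subset (hincl _ hγs), ?_⟩) 1 ⟨zero_le_one, le_rfl⟩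
    exact hrel.apply_grad_le_of_sub_eq_smul hf hfsm.2.1 hL hz hγs hs.1 hs.2 (hzγ s)
  refine ⟨hγint, ?_⟩
  have hmain := hrel.mul_le_sub_of_sub_eq_smul hf hfsm.2.1 hL hz hγint zero_le_one le_rfl (hzγ 1)
  have hkmin : k 0 ≤ k (f' (γ 1)) :=
    isMinOn_of_forall_ne_lt hk0min (interior_subset (hincl _ hγint))
  simp only [Breg, zero_sub, inner_neg_right]
  linarith

end PreconditionedStep

/-- linear convergence: under the descent-lemma assumptions with `f`
additionally Legendre convex (strictly convex on the interior of its domain), minimized at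
`xmin`, and dual relative strong convexity `μ*·D_f(x,y) ≤ D_k(∇f(y), ∇f(x))` with
`0 < μ* ≤ L*`, the iterates satisfy
`f(x_i) - f(xmin) ≤ (1 - μ*/L*)^i (f(x₀) - f(xmin))`. -/
theorem stmt15 {d : ℕ} (f k : E d → ℝ) (Sf Sk : Set (E d)) (f' k' : E d → E d)
    (hf : IsLegendre f Sf f')
    (hk : IsLegendre k Sk k')
    (hk0 : (0 : E d) ∈ Sk) (hk0min : ∀ y ∈ Sk, y ≠ 0 → k 0 < k y)
    (L μ : ℝ) (hμ : 0 < μ) (hμL : μ ≤ L)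
    (hincl : ∀ x ∈ interior Sf, f' x ∈ interior Sk)
    (hrel : ∀ x ∈ interior Sf, ∀ y ∈ interior Sf,
      Breg k k' (f' y) (f' x) ≤ L * Breg f f' x y)
    (hstr : ∀ x ∈ interior Sf, ∀ y ∈ interior Sf,
      μ * Breg f f' x y ≤ Breg k k' (f' y) (f' x))
    (xmin : E d) (hxmin : xmin ∈ Sf) (hmin : ∀ x ∈ Sf, f xmin ≤ f x)
    (x : ℕ → E d) (hx0 : x 0 ∈ interior Sf)
    (hiter : ∀ i : ℕ, x (i + 1) = x i - (1 / L) • k' (f' (x i))) :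
    ∀ i : ℕ, 0 < i →
      f (x i) - f xmin ≤ (1 - μ / L) ^ i * (f (x 0) - f xmin) := by
  obtain ⟨⟨-, hfc, -⟩, hfsm, -⟩ := hf
  obtain ⟨⟨-, hkc, -⟩, hksm, -⟩ := hk
  have hL : 0 < L := hμ.trans_le hμL
  have hk0int := hksm.mem_interior_of_isMinOn hkc hk0 (isMinOn_of_forall_ne_lt hk0min)
  have hxint : xmin ∈ interior Sf := hfsm.mem_interior_of_isMinOn hfc hxmin hmin
  have hgrad0 : f' xmin = 0 := IsLocalMin.hasGradientAt_eq_zero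
    ((isMinOn_iff.2 hmin).isLocalMin (mem_interior_iff_mem_nhds.1 hxint)) (hfsm.2.1 xmin hxint)
  have hstep := fun z (hz : z ∈ interior Sf) =>
    DualRelSmooth.step_mem_interior_and_descent hrel hfc hfsm hkc hk0int hk0min hL hincl hz
  have hint : ∀ i, x i ∈ interior Sf := Nat.rec hx0 fun i hi => hiter i ▸ (hstep _ hi).1
  have hcontract : ∀ i, f (x (i + 1)) - f xmin ≤ (1 - μ / L) * (f (x i) - f xmin) := by
    intro i
    have hdesc := (hstep _ (hint i)).2
    have hstrong := hstr (x i) (hint i) xmin hxint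
    have hBf : Breg f f' (x i) xmin = f (x i) - f xmin := by simp [Breg, hgrad0]
    rw [hBf, hgrad0] at hstrong
    rw [hiter, one_sub_div hL.ne', div_mul_eq_mul_div, le_div_iff₀ hL]
    linarith
  exact fun i _ => le_geom (u := fun j => f (x j) - f xmin)
    (sub_nonneg.2 ((div_le_one hL).2 hμL)) i fun j _ => hcontract j
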